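/- arXiv:2201.09803 — 2 statements merged into one kernel-verified Lean document; each statement's English description precedes it below -/
import Mathlib

section
/- Let F and V be the 3n×3n block matrices from the next-generation construction: F has blocks F₁ = (βλᵢⱼ) and F₂ = (βηⱼλᵢⱼ) in its first block row (all other blocks zero), and V is block lower-triangular with diagonal blocks V₁₁ = diag(αᵢ+μᵢ), V₂₂ = diag(γᵃᵢ+δᵃᵢ+μᵢ), V₃₃ = diag(γˢᵢ+δˢᵢ+μᵢ) and subdiagonal blocks −V₂₁ = −diag((1−σ)αᵢ), −V₃₁ = −diag(σαᵢ). Then V is invertible and the spectral radius of FV⁻¹ equals the spectral radius of F₁V₂₁V₁₁⁻¹V₂₂⁻¹ + F₂V₃₁V₁₁⁻¹V₃₃⁻¹. -/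
/-!
`V` is block lower triangular with invertible diagonal blocks, so `V⁻¹` is explicit and `F V⁻¹`,
whose last two block rows vanish, is block upper triangular with diagonal blocks
`G = F₁V₂₁V₁₁⁻¹V₂₂⁻¹ + F₂V₃₁V₁₁⁻¹V₃₃⁻¹` (the diagonal factors commute) and `0`. Its characteristic
polynomial is `χ_G · X^(2n)`, so its spectrum differs from that of `G` at most by the eigenvalue
`0`, which does not change the largest modulus.
-/

open Matrix Polynomial

/-- The spectral radius of a real square matrix: the maximum modulus of its complex
eigenvalues. -/
noncomputable def specRad {m : Type*} [Fintype m] [DecidableEq m]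
    (A : Matrix m m ℝ) : ℝ :=
  sSup {r : ℝ | ∃ z ∈ spectrum ℂ (A.map Complex.ofReal), r = ‖z‖}

lemma Real.sSup_insert_zero {s : Set ℝ} (hs : BddAbove s) (hs₀ : ∀ x ∈ s, 0 ≤ x) :
    sSup (insert 0 s) = sSup s := by
  rcases s.eq_empty_or_nonempty with rfl | hne
  · simp -- `sSup ∅ = 0` in `ℝ`
  · rw [csSup_insert hs hne, sup_eq_right.2 (Real.sSup_nonneg hs₀)]

lemma specRad_eq_sSup_norm_image_insert_zero {m : Type*} [Fintype m] [DecidableEq m]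
    (A : Matrix m m ℝ) :
    specRad A = sSup ((‖·‖) '' insert 0 (spectrum ℂ (A.map Complex.ofReal))) := by
  have hfin := (Matrix.finite_spectrum (A.map Complex.ofReal)).image (‖·‖)
  rw [Set.image_insert_eq, norm_zero,
    Real.sSup_insert_zero hfin.bddAbove (by rintro _ ⟨z, -, rfl⟩; exact norm_nonneg z)]
  simp only [specRad, Set.image, eq_comm]

lemma specRad_eq_of_insert_zero_spectrum_eq {m m' : Type*} [Fintype m] [DecidableEq m]
    [Fintype m'] [DecidableEq m'] {A : Matrix m m ℝ} {B : Matrix m' m' ℝ}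
    (h : insert 0 (spectrum ℂ (A.map Complex.ofReal)) =
      insert 0 (spectrum ℂ (B.map Complex.ofReal))) :
    specRad A = specRad B := by
  rw [specRad_eq_sSup_norm_image_insert_zero, specRad_eq_sSup_norm_image_insert_zero, h]

lemma insert_zero_spectrum_fromBlocks_zero₂₁_zero₂₂ {K m n : Type*} [Field K]
    [Fintype m] [DecidableEq m] [Fintype n] [DecidableEq n] (M : Matrix m m K) (N : Matrix m n K) :
    insert 0 (spectrum K (fromBlocks M N (0 : Matrix n m K) 0)) = insert 0 (spectrum K M) := by
  ext z
  simp only [Set.mem_insert_iff, mem_spectrum_iff_isRoot_charpoly, charpoly_fromBlocks_zero₂₁,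
    charpoly_zero, IsRoot.def, eval_mul, eval_pow, eval_X, mul_eq_zero, pow_eq_zero_iff']
  tauto

lemma specRad_fromBlocks_zero₂₁_zero₂₂ {m n : Type*} [Fintype m] [DecidableEq m] [Fintype n]
    [DecidableEq n] (M : Matrix m m ℝ) (N : Matrix m n ℝ) :
    specRad (fromBlocks M N 0 0) = specRad M := by
  apply specRad_eq_of_insert_zero_spectrum_eq
  rw [fromBlocks_map, Matrix.map_zero _ Complex.ofReal_zero, Matrix.map_zero _ Complex.ofReal_zero,
    insert_zero_spectrum_fromBlocks_zero₂₁_zero₂₂]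

lemma fromBlocks_zero_mul_inv_fromBlocks_zero₁₂ {R m n : Type*} [CommRing R] [Fintype m]
    [DecidableEq m] [Fintype n] [DecidableEq n] (B : Matrix m n R) (A : Matrix m m R)
    (C : Matrix n m R) (D : Matrix n n R) (hAD : IsUnit A ↔ IsUnit D) :
    fromBlocks 0 B 0 0 * (fromBlocks A 0 C D)⁻¹ =
      fromBlocks (-(B * D⁻¹ * C * A⁻¹)) (B * D⁻¹) 0 0 := by
  rw [inv_fromBlocks_zero₁₂_of_isUnit_iff _ _ _ hAD, fromBlocks_multiply]
  simp [Matrix.mul_assoc]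

lemma fromCols_mul_inv_fromBlocks_zero_zero_mul_fromRows {R m n n₁ n₂ : Type*} [CommRing R]
    [Fintype n₁] [DecidableEq n₁] [Fintype n₂] [DecidableEq n₂] (B₁ : Matrix m n₁ R)
    (B₂ : Matrix m n₂ R) (D₁ : Matrix n₁ n₁ R) (D₂ : Matrix n₂ n₂ R) (C₁ : Matrix n₁ n R)
    (C₂ : Matrix n₂ n R) (hD : IsUnit D₁ ↔ IsUnit D₂) :
    fromCols B₁ B₂ * (fromBlocks D₁ 0 0 D₂)⁻¹ * fromRows C₁ C₂ =
      B₁ * D₁⁻¹ * C₁ + B₂ * D₂⁻¹ * C₂ := by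
  rw [inv_fromBlocks_zero₁₂_of_isUnit_iff _ _ _ hD, fromCols_mul_fromBlocks, fromCols_mul_fromRows]
  simp

theorem stmt7_general (n : ℕ)
    (α μ γa γs δa δs : Fin n → ℝ) (σ : ℝ)
    (hα : ∀ i, 0 < α i) (hμ : ∀ i, 0 < μ i) (hγa : ∀ i, 0 < γa i)
    (hγs : ∀ i, 0 < γs i) (hδa : ∀ i, 0 < δa i) (hδs : ∀ i, 0 < δs i)
    (F₁ F₂ V₁₁ V₂₂ V₃₃ V₂₁ V₃₁ : Matrix (Fin n) (Fin n) ℝ)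
    (hV₁₁ : V₁₁ = Matrix.diagonal fun i => α i + μ i)
    (hV₂₂ : V₂₂ = Matrix.diagonal fun i => γa i + δa i + μ i)
    (hV₃₃ : V₃₃ = Matrix.diagonal fun i => γs i + δs i + μ i)
    (hV₂₁ : V₂₁ = Matrix.diagonal fun i => (1 - σ) * α i)
    (hV₃₁ : V₃₁ = Matrix.diagonal fun i => σ * α i)
    (F V : Matrix (Fin n ⊕ (Fin n ⊕ Fin n)) (Fin n ⊕ (Fin n ⊕ Fin n)) ℝ)
    (hF : F = Matrix.fromBlocks 0
        (Matrix.of fun i p => Sum.elim (fun j => F₁ i j) (fun j => F₂ i j) p) 0 0)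
    (hV : V = Matrix.fromBlocks V₁₁ 0
        (Matrix.of fun p i => Sum.elim (fun a => -(V₂₁ a i)) (fun a => -(V₃₁ a i)) p)
        (Matrix.fromBlocks V₂₂ 0 0 V₃₃)) :
    IsUnit V.det ∧
    specRad (F * V⁻¹) = specRad (F₁ * V₂₁ * V₁₁⁻¹ * V₂₂⁻¹ + F₂ * V₃₁ * V₁₁⁻¹ * V₃₃⁻¹) := by
  have isUnit_diagonal_of_pos : ∀ d : Fin n → ℝ, (∀ i, 0 < d i) → IsUnit (diagonal d) :=
    fun d hd => isUnit_diagonal.2 (Pi.isUnit_iff.2 fun i => (hd i).ne'.isUnit)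
  have hU₁₁ : IsUnit V₁₁ := hV₁₁ ▸ isUnit_diagonal_of_pos _ fun i => by linarith [hα i, hμ i]
  have hU₂₂ : IsUnit V₂₂ :=
    hV₂₂ ▸ isUnit_diagonal_of_pos _ fun i => by linarith [hγa i, hδa i, hμ i]
  have hU₃₃ : IsUnit V₃₃ :=
    hV₃₃ ▸ isUnit_diagonal_of_pos _ fun i => by linarith [hγs i, hδs i, hμ i]
  have hU : IsUnit (fromBlocks V₂₂ 0 0 V₃₃) := isUnit_fromBlocks_zero₁₂.2 ⟨hU₂₂, hU₃₃⟩
  replace hF : F = fromBlocks 0 (fromCols F₁ F₂) 0 0 := hF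
  replace hV : V = fromBlocks V₁₁ 0 (fromRows (-V₂₁) (-V₃₁)) (fromBlocks V₂₂ 0 0 V₃₃) := by
    rw [hV]; congr; ext (p | p) i <;> rfl
  refine ⟨?_, ?_⟩
  · rw [← isUnit_iff_isUnit_det, hV]
    exact isUnit_fromBlocks_zero₁₂.2 ⟨hU₁₁, hU⟩
  rw [hF, hV, fromBlocks_zero_mul_inv_fromBlocks_zero₁₂ _ _ _ _ (iff_of_true hU₁₁ hU),
    specRad_fromBlocks_zero₂₁_zero₂₂,
    fromCols_mul_inv_fromBlocks_zero_zero_mul_fromRows _ _ _ _ _ _ (iff_of_true hU₂₂ hU₃₃)]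
  subst hV₁₁ hV₂₂ hV₃₃ hV₂₁ hV₃₁
  simp only [inv_diagonal, Matrix.mul_neg, Matrix.add_mul, Matrix.neg_mul, neg_add, neg_neg,
    Matrix.mul_assoc, diagonal_mul_diagonal]
  congr 4 <;> funext i <;> ring

/-- For the 3n×3n next-generation block matrices F (with blocks
F₁ = (βλᵢⱼ), F₂ = (βηⱼλᵢⱼ) in its first block row) and block lower-triangular V
(diagonal blocks V₁₁ = diag(αᵢ+μᵢ), V₂₂ = diag(γᵃᵢ+δᵃᵢ+μᵢ), V₃₃ = diag(γˢᵢ+δˢᵢ+μᵢ),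
subdiagonal blocks −V₂₁ = −diag((1−σ)αᵢ), −V₃₁ = −diag(σαᵢ)), V is invertible and
ρ(FV⁻¹) = ρ(F₁V₂₁V₁₁⁻¹V₂₂⁻¹ + F₂V₃₁V₁₁⁻¹V₃₃⁻¹). -/
theorem stmt7 (n : ℕ)
    (α μ γa γs δa δs η : Fin n → ℝ) (β σ : ℝ)
    (hα : ∀ i, 0 < α i) (hμ : ∀ i, 0 < μ i) (hγa : ∀ i, 0 < γa i)
    (hγs : ∀ i, 0 < γs i) (hδa : ∀ i, 0 < δa i) (hδs : ∀ i, 0 < δs i)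
    (hσ0 : 0 ≤ σ) (hσ1 : σ ≤ 1)
    (lam : Fin n → Fin n → ℝ) (hlam : ∀ i j, 0 ≤ lam i j)
    (hη0 : ∀ j, 0 ≤ η j) (hη1 : ∀ j, η j ≤ 1)
    (F₁ F₂ V₁₁ V₂₂ V₃₃ V₂₁ V₃₁ : Matrix (Fin n) (Fin n) ℝ)
    (hF₁ : F₁ = Matrix.of fun i j => β * lam i j)
    (hF₂ : F₂ = Matrix.of fun i j => β * η j * lam i j)
    (hV₁₁ : V₁₁ = Matrix.diagonal fun i => α i + μ i)
    (hV₂₂ : V₂₂ = Matrix.diagonal fun i => γa i + δa i + μ i)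
    (hV₃₃ : V₃₃ = Matrix.diagonal fun i => γs i + δs i + μ i)
    (hV₂₁ : V₂₁ = Matrix.diagonal fun i => (1 - σ) * α i)
    (hV₃₁ : V₃₁ = Matrix.diagonal fun i => σ * α i)
    (F V : Matrix (Fin n ⊕ (Fin n ⊕ Fin n)) (Fin n ⊕ (Fin n ⊕ Fin n)) ℝ)
    (hF : F = Matrix.fromBlocks 0
        (Matrix.of fun i p => Sum.elim (fun j => F₁ i j) (fun j => F₂ i j) p) 0 0)
    (hV : V = Matrix.fromBlocks V₁₁ 0
        (Matrix.of fun p i => Sum.elim (fun a => -(V₂₁ a i)) (fun a => -(V₃₁ a i)) p)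
        (Matrix.fromBlocks V₂₂ 0 0 V₃₃)) :
    IsUnit V.det ∧
    specRad (F * V⁻¹) = specRad (F₁ * V₂₁ * V₁₁⁻¹ * V₂₂⁻¹ + F₂ * V₃₁ * V₁₁⁻¹ * V₃₃⁻¹) :=
  stmt7_general n α μ γa γs δa δs σ hα hμ hγa hγs hδa hδs F₁ F₂ V₁₁ V₂₂ V₃₃ V₂₁ V₃₁ hV₁₁ hV₂₂ hV₃₃
    hV₂₁ hV₃₁ F V hF hV
end

section
/- For positive reals S, S̄, E, Ē, I, Ī, we have 2 − S̄/S + I/Ī − E/Ē − (S I Ē)/(S̄ Ī E) ≤ I/Ī − E/Ē − ln(I/Ī) + ln(E/Ē). -/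
/-- For positive reals S, S̄, E, Ē, I, Ī, the key per-edge Lyapunov
estimate 2 − S̄/S + I/Ī − E/Ē − (S·I·Ē)/(S̄·Ī·E) ≤ I/Ī − E/Ē − ln(I/Ī) + ln(E/Ē). -/
theorem stmt10 (S Sb E Eb I Ib : ℝ)
    (hS : 0 < S) (hSb : 0 < Sb) (hE : 0 < E) (hEb : 0 < Eb)
    (hI : 0 < I) (hIb : 0 < Ib) :
    2 - Sb / S + I / Ib - E / Eb - (S * I * Eb) / (Sb * Ib * E)
      ≤ I / Ib - E / Eb - Real.log (I / Ib) + Real.log (E / Eb) := by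
  have ha : 0 < Sb / S := div_pos hSb hS
  have hb : 0 < (S * I * Eb) / (Sb * Ib * E) :=
    div_pos (by positivity) (by positivity)
  have h1 := Real.log_le_sub_one_of_pos ha
  have h2 := Real.log_le_sub_one_of_pos hb
  have hprod : Real.log (Sb / S) + Real.log ((S * I * Eb) / (Sb * Ib * E))
      = Real.log (I / Ib) - Real.log (E / Eb) := by
    rw [← Real.log_mul (ne_of_gt ha) (ne_of_gt hb)]
    have : Sb / S * ((S * I * Eb) / (Sb * Ib * E)) = (I / Ib) / (E / Eb) := by
      field_simp
    rw [this, Real.log_div (by positivity) (by positivity)]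
  linarith
end
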